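/- For every complex number μ and the Volterra operator V on L²[0,1], the operator norm satisfies ‖V + μI‖ ≥ |μ|, with equality never attained: in fact ‖V + μI‖ > |μ| for all μ ∈ ℂ. -/

import Mathlib

/-!
For a bounded operator `A` on an inner product space and a vector `g` with `A g ≠ 0` and
`⟪A g, g⟫ = 0`, Pythagoras gives `‖(A + μ) g‖² = ‖A g‖² + |μ|²‖g‖² > |μ|²‖g‖²`, so
`‖A + μ‖ > |μ|` for every scalar `μ`. For the Volterra operator take `g = 1 - 2x`: it has mean
zero, so `V g = x - x²` vanishes at both endpoints and `⟪V g, g⟫ = ∫₀¹ (V g) (V g)' = 0`.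
-/

open MeasureTheory

noncomputable def m : Measure ℝ := volume.restrict (Set.Icc 0 1)

open Set intervalIntegral

theorem norm_lt_opNorm_add_smul_one {𝕜 E : Type*} [RCLike 𝕜] [NormedAddCommGroup E]
    [InnerProductSpace 𝕜 E] (A : E →L[𝕜] E) {g : E} (hAg : A g ≠ 0)
    (hg : inner 𝕜 (A g) g = 0) (μ : 𝕜) : ‖μ‖ < ‖A + μ • (1 : E →L[𝕜] E)‖ := by
  have hg_pos : 0 < ‖g‖ := norm_pos_iff.2 fun h => hAg (by rw [h, map_zero])
  have hAg_pos : 0 < ‖A g‖ := norm_pos_iff.2 hAg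
  have hpyth : ‖(A + μ • 1) g‖ ^ 2 = ‖A g‖ ^ 2 + (‖μ‖ * ‖g‖) ^ 2 := by
    have h := norm_add_sq_eq_norm_sq_add_norm_sq_of_inner_eq_zero (A g) (μ • g)
      (by rw [inner_smul_right, hg, mul_zero])
    simpa [sq, norm_smul] using h
  have hsq : (‖μ‖ * ‖g‖) ^ 2 < (‖A + μ • 1‖ * ‖g‖) ^ 2 := calc
    _ < ‖(A + μ • 1) g‖ ^ 2 := by rw [hpyth]; linarith [pow_pos hAg_pos 2]
    _ ≤ _ := pow_le_pow_left₀ (norm_nonneg _) ((A + μ • 1).le_opNorm g) 2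
  exact lt_of_mul_lt_mul_right (lt_of_pow_lt_pow_left₀ 2 (by positivity) hsq) hg_pos.le

instance : IsFiniteMeasure m := by
  rw [m]; infer_instance

lemma ae_mem_Icc_m : ∀ᵐ x ∂m, x ∈ Icc (0 : ℝ) 1 := ae_restrict_mem measurableSet_Icc

lemma memLp_m_of_continuous {F : ℝ → ℂ} (hF : Continuous F) (p : ENNReal) : MemLp F p m := by
  obtain ⟨C, hC⟩ := isCompact_Icc.exists_bound_of_continuousOn (hF.continuousOn (s := Icc 0 1))
  exact MemLp.of_bound hF.aestronglyMeasurable C (ae_mem_Icc_m.mono hC)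

lemma setIntegral_Ioc_m {F : ℝ → ℂ} {x : ℝ} (hx : x ∈ Icc (0 : ℝ) 1) :
    ∫ t in Ioc 0 x, F t ∂m = ∫ t in 0..x, F t := by
  rw [m, Measure.restrict_restrict measurableSet_Ioc,
    inter_eq_left.2 (Ioc_subset_Icc_self.trans (Icc_subset_Icc le_rfl hx.2)),
    integral_of_le hx.1]

lemma inner_eq_intervalIntegral {f g : Lp ℂ 2 m} {F G : ℝ → ℝ}
    (hf : f =ᵐ[m] fun x => (F x : ℂ)) (hg : g =ᵐ[m] fun x => (G x : ℂ)) :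
    inner ℂ f g = ((∫ x in 0..1, F x * G x : ℝ) : ℂ) := by
  rw [L2.inner_def, integral_of_le zero_le_one, ← integral_Icc_eq_integral_Ioc, ← m,
    ← integral_complex_ofReal]
  refine integral_congr_ae ?_
  filter_upwards [hf, hg] with x hfx hgx
  simp [hfx, hgx, mul_comm]

lemma volterra_ae_eq_intervalIntegral {V : Lp ℂ 2 m →L[ℂ] Lp ℂ 2 m}
    (hV : ∀ f : Lp ℂ 2 m, V f =ᵐ[m] fun x => ∫ t in Set.Ioc 0 x, f t ∂m)
    {g : Lp ℂ 2 m} {F : ℝ → ℂ} (hg : g =ᵐ[m] F) : V g =ᵐ[m] fun x => ∫ t in 0..x, F t := by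
  filter_upwards [hV g, ae_mem_Icc_m] with x hVx hx
  rw [hVx, integral_congr_ae (ae_restrict_of_ae hg), setIntegral_Ioc_m hx]

lemma integral_one_sub_two_mul (x : ℝ) : ∫ t in (0 : ℝ)..x, (1 - 2 * t) = x - x ^ 2 := by
  have hderiv : ∀ t ∈ uIcc 0 x, HasDerivAt (fun t : ℝ => t - t ^ 2) (1 - 2 * t) t := fun t _ =>
    ((hasDerivAt_id t).sub (hasDerivAt_pow 2 t)).congr_deriv (by simp)
  rw [integral_eq_sub_of_hasDerivAt hderiv (by apply Continuous.intervalIntegrable; fun_prop)]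
  ring

lemma integral_sub_sq_mul_one_sub_two_mul :
    ∫ x in (0 : ℝ)..1, (x - x ^ 2) * (1 - 2 * x) = 0 := by
  have hderiv : ∀ x ∈ uIcc (0 : ℝ) 1,
      HasDerivAt (fun x : ℝ => (x - x ^ 2) ^ 2 / 2) ((x - x ^ 2) * (1 - 2 * x)) x := fun x _ =>
    ((((hasDerivAt_id' x).sub (hasDerivAt_pow 2 x)).pow 2).div_const 2).congr_deriv
      (by simp only [Pi.sub_apply]; ring)
  rw [integral_eq_sub_of_hasDerivAt hderiv (by apply Continuous.intervalIntegrable; fun_prop)]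
  norm_num

lemma integral_sub_sq_mul_self_pos : 0 < ∫ x in (0 : ℝ)..1, (x - x ^ 2) * (x - x ^ 2) := by
  refine intervalIntegral_pos_of_pos_on (by apply Continuous.intervalIntegrable; fun_prop)
    (fun x hx => ?_) zero_lt_one
  have : 0 < x - x ^ 2 := by nlinarith [hx.1, hx.2]
  positivity

lemma exists_volterra_ne_zero_inner_eq_zero (V : Lp ℂ 2 m →L[ℂ] Lp ℂ 2 m)
    (hV : ∀ f : Lp ℂ 2 m, V f =ᵐ[m] fun x => ∫ t in Set.Ioc 0 x, f t ∂m) :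
    ∃ g : Lp ℂ 2 m, V g ≠ 0 ∧ inner ℂ (V g) g = 0 := by
  let g := (memLp_m_of_continuous (F := fun x => ((1 - 2 * x : ℝ) : ℂ)) (by fun_prop) 2).toLp
  have hg : g =ᵐ[m] fun x => ((1 - 2 * x : ℝ) : ℂ) := MemLp.coeFn_toLp _
  have hVg : V g =ᵐ[m] fun x => ((x - x ^ 2 : ℝ) : ℂ) := by
    filter_upwards [volterra_ae_eq_intervalIntegral hV hg] with x hx
    rw [hx, intervalIntegral.integral_ofReal, integral_one_sub_two_mul]
  refine ⟨g, fun hVg0 => ?_, ?_⟩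
  · have h := inner_eq_intervalIntegral hVg hVg
    rw [hVg0, inner_zero_left, eq_comm, Complex.ofReal_eq_zero] at h
    exact integral_sub_sq_mul_self_pos.ne' h
  · rw [inner_eq_intervalIntegral hVg hg, integral_sub_sq_mul_one_sub_two_mul, Complex.ofReal_zero]

theorem norm_volterra_add_smul_id_gt (V : Lp ℂ 2 m →L[ℂ] Lp ℂ 2 m)
    (hV : ∀ f : Lp ℂ 2 m, V f =ᵐ[m] fun x => ∫ t in Set.Ioc 0 x, f t ∂m) :
    ∀ μ : ℂ, ‖μ‖ < ‖V + μ • (1 : Lp ℂ 2 m →L[ℂ] Lp ℂ 2 m)‖ := by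
  obtain ⟨g, hVg, hinner⟩ := exists_volterra_ne_zero_inner_eq_zero V hV
  exact norm_lt_opNorm_add_smul_one V hVg hinner
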